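/- arXiv:2309.03355 — 3 statements merged into one kernel-verified Lean document; each statement's English description precedes it below -/
import Mathlib

section
/- Let $T$ be a bounded operator on a separable Banach space $X$, let $X_0 \subseteq X$ be dense, let $\{n_k\}$ be a strictly increasing sequence of natural numbers, and let $S : X_0 \to X_0$ be a map such that for each $x \in X_0$: $T^{n_k} x \to 0$, $S^{n_k} x \to 0$, and $T S x = x$. Then $T$ is hypercyclic, i.e., there exists $x \in X$ whose orbit $\{T^n x : n \ge 0\}$ is dense in $X$. -/
open Filter Topology Metric TopologicalSpace

/-- Gethner–Shapiro criterion: under the stated conditions, `T` is hypercyclic. -/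
theorem stmt8 {X : Type*} [NormedAddCommGroup X] [NormedSpace ℂ X] [CompleteSpace X]
    [TopologicalSpace.SeparableSpace X]
    (T : X →L[ℂ] X) (X₀ : Set X) (hdense : Dense X₀)
    (n : ℕ → ℕ) (hn : StrictMono n)
    (S : X → X) (hS : ∀ x ∈ X₀, S x ∈ X₀)
    (hT0 : ∀ x ∈ X₀, Filter.Tendsto (fun k => (T ^ n k) x) Filter.atTop (nhds 0))
    (hS0 : ∀ x ∈ X₀, Filter.Tendsto (fun k => S^[n k] x) Filter.atTop (nhds 0))
    (hTS : ∀ x ∈ X₀, T (S x) = x) :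
    ∃ x : X, Dense (Set.range fun m : ℕ => (T ^ m) x) := by
  have : Nonempty X := ⟨0⟩
  -- key algebraic lemma: T^m (S^[m] v) = v on X₀
  have key : ∀ m : ℕ, ∀ v ∈ X₀, S^[m] v ∈ X₀ ∧ (T ^ m) (S^[m] v) = v := by
    intro m
    induction m with
    | zero => intro v hv; simpa using hv
    | succ m ih =>
      intro v hv
      have h1 := (ih v hv).1
      refine ⟨?_, ?_⟩
      · rw [Function.iterate_succ_apply']; exact hS _ h1
      · rw [Function.iterate_succ_apply', pow_succ]
        simp only [ContinuousLinearMap.mul_apply]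
        rw [hTS _ h1]
        exact (ih v hv).2
  -- topological transitivity
  have trans : ∀ z : X, ∀ ε : ℝ, 0 < ε → ∀ y : X, ∀ r : ℝ, 0 < r →
      ∃ x : X, dist x z < ε ∧ ∃ m : ℕ, dist ((T ^ m) x) y < r := by
    intro z ε hε y r hr
    obtain ⟨u, hu, huz⟩ := hdense.exists_dist_lt z (half_pos hε)
    obtain ⟨v, hv, hvy⟩ := hdense.exists_dist_lt y (half_pos hr)
    have h1 : Tendsto (fun k => u + S^[n k] v) atTop (𝓝 u) := by
      simpa using tendsto_const_nhds.add (hS0 v hv)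
    have h2 : Tendsto (fun k => (T ^ n k) (u + S^[n k] v)) atTop (𝓝 v) := by
      have heq : (fun k => (T ^ n k) (u + S^[n k] v)) = fun k => (T ^ n k) u + v := by
        funext k
        rw [map_add, (key (n k) v hv).2]
      rw [heq]
      simpa using (hT0 u hu).add (tendsto_const_nhds : Tendsto (fun _ : ℕ => v) atTop (𝓝 v))
    have e1 : ∀ᶠ k in atTop, dist (u + S^[n k] v) z < ε := by
      filter_upwards [Metric.tendsto_nhds.mp h1 (ε / 2) (half_pos hε)] with k hk
      calc dist (u + S^[n k] v) z ≤ dist (u + S^[n k] v) u + dist u z := dist_triangle _ _ _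
        _ < ε / 2 + ε / 2 := add_lt_add hk (by simpa [dist_comm] using huz)
        _ = ε := add_halves ε
    have e2 : ∀ᶠ k in atTop, dist ((T ^ n k) (u + S^[n k] v)) y < r := by
      filter_upwards [Metric.tendsto_nhds.mp h2 (r / 2) (half_pos hr)] with k hk
      calc dist ((T ^ n k) (u + S^[n k] v)) y
          ≤ dist ((T ^ n k) (u + S^[n k] v)) v + dist v y := dist_triangle _ _ _
        _ < r / 2 + r / 2 := add_lt_add hk (by simpa [dist_comm] using hvy)
        _ = r := add_halves r
    obtain ⟨k, hk1, hk2⟩ := (e1.and e2).exists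
    exact ⟨u + S^[n k] v, hk1, n k, hk2⟩
  -- Baire category argument
  set y : ℕ → X := denseSeq X with hy
  have hyd : DenseRange y := denseRange_denseSeq X
  set G : ℕ × ℕ → Set X := fun p => ⋃ m : ℕ, (T ^ m) ⁻¹' Metric.ball (y p.1) (1 / (p.2 + 1)) with hG
  have hGopen : ∀ p, IsOpen (G p) :=
    fun p => isOpen_iUnion fun m => Metric.isOpen_ball.preimage (T ^ m).continuous
  have hGdense : ∀ p, Dense (G p) := by
    intro p
    rw [Metric.dense_iff]
    intro z ε hε
    have hpos : (0 : ℝ) < 1 / (p.2 + 1) := by positivity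
    obtain ⟨x, hxz, m, hxm⟩ := trans z ε hε (y p.1) _ hpos
    exact ⟨x, Metric.mem_ball.mpr hxz, Set.mem_iUnion.mpr ⟨m, Metric.mem_ball.mpr hxm⟩⟩
  have hdi : Dense (⋂ p, G p) := dense_iInter_of_isOpen hGopen hGdense
  obtain ⟨x, hx⟩ := hdi.nonempty
  refine ⟨x, ?_⟩
  rw [Metric.dense_iff]
  intro z ε hε
  obtain ⟨j, hwz⟩ := hyd.exists_dist_lt z (half_pos hε)
  obtain ⟨k, hk⟩ := exists_nat_one_div_lt (show (0:ℝ) < ε/2 from half_pos hε)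
  have hxG := Set.mem_iInter.mp hx (j, k)
  obtain ⟨m, hm⟩ := Set.mem_iUnion.mp hxG
  refine ⟨(T ^ m) x, Metric.mem_ball.mpr ?_, ⟨m, rfl⟩⟩
  have hm' : dist ((T ^ m) x) (y j) < 1 / (k + 1) := Metric.mem_ball.mp hm
  calc dist ((T ^ m) x) z ≤ dist ((T ^ m) x) (y j) + dist (y j) z := dist_triangle _ _ _
    _ < ε / 2 + ε / 2 := by
        refine add_lt_add (hm'.trans hk) ?_
        simpa [dist_comm] using hwz
    _ = ε := add_halves ε
end

section
/- Let $T$ be a bounded operator on a separable Banach space $X$, $X_0$ a dense subset of $X$, and $S : X_0 \to X_0$ a map such that for each $x \in X_0$, the series $\sum_{n \ge 0} T^n x$ and $\sum_{n \ge 0} S^n x$ converge unconditionally and $T S x = x$. Then $T$ has a dense set of periodic points, i.e., the set $\{y \in X : \exists p \ge 1, T^p y = y\}$ is dense in $X$. -/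
/-!
Glue the forward orbit `Tⁿx` and the backward orbit `Sⁿx` into a summable two-sided orbit
`v : ℤ → X` with `T (v n) = v (n + 1)`. Summing it along the multiples of `p` gives
`y = ∑ₖ v (k p) = x + ∑_{k ≥ 1} (T^{kp} x + S^{kp} x)`, which `T^p` merely shifts, so `T^p y = y`;
and `y → x` as `p → ∞`, because the indices `k p` with `k ≠ 0` eventually avoid any finite set,
so the vanishing-tail criterion for summable families applies.
-/

open Filter Topology

section TwoSidedOrbit

variable {R E : Type*} [Semiring R] [AddCommGroup E] [Module R E] [TopologicalSpace E]

theorem pow_apply_eq_of_apply_eq_succ {T : E →L[R] E} {v : ℤ → E}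
    (hv : ∀ n, T (v n) = v (n + 1)) (p : ℕ) (n : ℤ) : (T ^ p) (v n) = v (n + p) := by
  induction p with
  | zero => simp
  | succ p ih => rw [pow_succ', mul_apply_eq_comp, ih, hv]; push_cast; ring_nf

def twoSidedOrbit (T : E →L[R] E) (u : ℕ → E) : ℤ → E
  | .ofNat n => (T ^ n) (u 0)
  | .negSucc n => u (n + 1)

theorem apply_twoSidedOrbit {T : E →L[R] E} {u : ℕ → E} (hu : ∀ n, T (u (n + 1)) = u n) (n : ℤ) :
    T (twoSidedOrbit T u n) = twoSidedOrbit T u (n + 1) := by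
  match n with
  | .ofNat n => rw [twoSidedOrbit, ← mul_apply_eq_comp, ← pow_succ']; rfl
  | .negSucc 0 => exact hu 0
  | .negSucc (n + 1) => exact hu (n + 1)

theorem summable_twoSidedOrbit [IsTopologicalAddGroup E] {T : E →L[R] E} {u : ℕ → E}
    (hT : Summable fun n : ℕ => (T ^ n) (u 0)) (hu : Summable u) :
    Summable (twoSidedOrbit T u) :=
  .of_nat_of_neg_add_one hT ((summable_nat_add_iff 1).2 hu)

end TwoSidedOrbit

section Periodization

variable {R E : Type*} [Semiring R] [AddCommGroup E] [Module R E] [UniformSpace E]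
  [IsUniformAddGroup E] [CompleteSpace E] [T2Space E]

noncomputable def periodization (v : ℤ → E) (p : ℕ) : E := ∑' k : ℤ, v (k * p)

theorem pow_apply_periodization {T : E →L[R] E} {v : ℤ → E}
    (hv : ∀ n, T (v n) = v (n + 1)) (hsum : Summable v) {p : ℕ} (hp : p ≠ 0) :
    (T ^ p) (periodization v p) = periodization v p := by
  have hinj : Function.Injective fun k : ℤ => k * p := mul_left_injective₀ (by exact_mod_cast hp)
  have hsum_p : Summable fun k : ℤ => v (k * p) := hsum.comp_injective hinj
  calc (T ^ p) (periodization v p) = ∑' k : ℤ, v ((k + 1) * p) := by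
        rw [periodization, (T ^ p).map_tsum hsum_p]
        simp only [pow_apply_eq_of_apply_eq_succ hv, add_one_mul]
    _ = periodization v p := (Equiv.addRight 1).tsum_eq fun k => v (k * p)

theorem tendsto_periodization {v : ℤ → E} (hsum : Summable v) :
    Tendsto (periodization v) atTop (𝓝 (v 0)) := by
  rw [← tendsto_sub_nhds_zero_iff]
  intro e he
  obtain ⟨s, hs⟩ := hsum.tsum_vanishing he
  refine mem_map.2 ?_
  filter_upwards [eventually_gt_atTop (s.sup Int.natAbs)] with p hp
  have hinj : Function.Injective fun k : ℤ => k * p := mul_left_injective₀ (by omega)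
  have hsum_p : Summable fun k : ℤ => v (k * p) := hsum.comp_injective hinj
  have hdisj : Disjoint ((fun k : ℤ => k * p) '' (↑({0} : Finset ℤ))ᶜ) ↑s := by
    rw [Set.disjoint_left]
    rintro _ ⟨k, hk, rfl⟩ hks
    have hle := Finset.le_sup (f := Int.natAbs) hks
    simp only [Finset.coe_singleton, Set.mem_compl_iff, Set.mem_singleton_iff] at hk
    rw [Int.natAbs_mul, Int.natAbs_natCast] at hle
    have : 1 ≤ k.natAbs := Int.natAbs_pos.mpr hk
    nlinarith
  have hsplit := hsum_p.sum_add_tsum_compl (s := {0})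
  rw [Set.mem_preimage, periodization, ← hsplit, Finset.sum_singleton, zero_mul,
    add_sub_cancel_left, ← tsum_image _ hinj.injOn]
  exact hs _ hdisj

end Periodization

theorem stmt11_general {X : Type*} [NormedAddCommGroup X] [NormedSpace ℂ X] [CompleteSpace X]
    (T : X →L[ℂ] X) (X₀ : Set X) (hdense : Dense X₀)
    (S : X → X) (hS : ∀ x ∈ X₀, S x ∈ X₀)
    (hT : ∀ x ∈ X₀, Summable fun n : ℕ => (T ^ n) x)
    (hSsum : ∀ x ∈ X₀, Summable fun n : ℕ => S^[n] x)
    (hTS : ∀ x ∈ X₀, T (S x) = x) :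
    Dense {y : X | ∃ p : ℕ, 1 ≤ p ∧ (T ^ p) y = y} := by
  refine dense_closure.mp (hdense.mono fun x hx => ?_)
  have hback : ∀ n, T (S^[n + 1] x) = S^[n] x := fun n => by
    rw [Function.iterate_succ_apply']
    exact hTS _ (Set.MapsTo.iterate hS n hx)
  have hsum : Summable (twoSidedOrbit T fun n => S^[n] x) :=
    summable_twoSidedOrbit (hT x hx) (hSsum x hx)
  refine mem_closure_of_tendsto (tendsto_periodization hsum) ?_
  filter_upwards [eventually_ge_atTop 1] with p hp
  exact ⟨p, hp, pow_apply_periodization (apply_twoSidedOrbit hback) hsum (by omega)⟩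

/-- Chaoticity criterion (periodic part): if `∑ Tⁿx` and `∑ Sⁿx` converge unconditionally and
`TSx = x` on a dense set `X₀`, then the periodic points of `T` are dense. -/
theorem stmt11 {X : Type*} [NormedAddCommGroup X] [NormedSpace ℂ X] [CompleteSpace X]
    [TopologicalSpace.SeparableSpace X]
    (T : X →L[ℂ] X) (X₀ : Set X) (hdense : Dense X₀)
    (S : X → X) (hS : ∀ x ∈ X₀, S x ∈ X₀)
    (hT : ∀ x ∈ X₀, Summable fun n : ℕ => (T ^ n) x)
    (hSsum : ∀ x ∈ X₀, Summable fun n : ℕ => S^[n] x)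
    (hTS : ∀ x ∈ X₀, T (S x) = x) :
    Dense {y : X | ∃ p : ℕ, 1 ≤ p ∧ (T ^ p) y = y} :=
  stmt11_general T X₀ hdense S hS hT hSsum hTS
end

section
/- Let $\{a_n\}$, $\{b_n\}$ be nonzero complex sequences with $r := \sup_n |b_n/a_{n+1}| < 1$, and let $\lambda \ne 0$. Suppose $f = \sum_{n\ge 0} \lambda_n f_n \in \mathcal{H}_{a,b}$ is a nonzero vector and $p \ge 1$ satisfy $(\lambda B)^p f = f$. Writing $f(z) = \sum_n A_n z^n$ with $A_0 = \lambda_0 a_0$ and $A_n = \lambda_{n-1} b_{n-1} + \lambda_n a_n$, if $A_0 \ne 0$ then $\sum_{k=1}^{\infty} \left|\frac{1}{\lambda^{kp} a_{kp}}\right|^2 < \infty$. (In fact, nontrivial periodicity implies $\sum_{n=0}^\infty |\lambda^n a_n|^{-2} < \infty$.) -/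
/-!
Taking `j = 0` in the periodicity relation gives `A₀ = λ^N A_N` for every multiple `N = kp`,
`k ≥ 1`, hence `1 / (λ^N a_N) = (A_N / a_N) / A₀`. Since
`A_N / a_N = λ_{N-1} (b_{N-1} / a_N) + λ_N`, this is at most `(r |λ_{N-1}| + |λ_N|) / |A₀|`,
a sequence in `ℓ²` because `(λ_n)` is.
-/

theorem Summable.comp_mul_add {E : Type*} [NormedAddCommGroup E] [CompleteSpace E]
    {f : ℕ → E} (hf : Summable f) {p : ℕ} (hp : 0 < p) (c : ℕ) :
    Summable fun k => f (p * k + c) :=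
  hf.comp_injective ((strictMono_mul_left_of_pos hp).add_const c).injective

theorem summable_sq_add {ι : Type*} {f g : ι → ℝ} (hf : Summable fun i => f i ^ 2)
    (hg : Summable fun i => g i ^ 2) : Summable fun i => (f i + g i) ^ 2 :=
  ((hf.add hg).mul_left 2).of_nonneg_of_le (fun _ => sq_nonneg _) fun _ => add_sq_le

theorem summable_sq_const_mul {ι : Type*} {f : ι → ℝ} (hf : Summable fun i => f i ^ 2)
    (c : ℝ) : Summable fun i => (c * f i) ^ 2 := by
  simpa only [mul_pow] using hf.mul_left (c ^ 2)

theorem norm_add_mul_div_le {𝕜 : Type*} [NormedField 𝕜] {x y α β : 𝕜} {r : ℝ}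
    (hα : α ≠ 0) (hr : ‖β / α‖ ≤ r) : ‖(x * β + y * α) / α‖ ≤ ‖x‖ * r + ‖y‖ := by
  rw [add_div, mul_div_assoc, mul_div_cancel_right₀ y hα]
  refine (norm_add_le _ _).trans ?_
  rw [norm_mul]
  gcongr

theorem norm_one_div_mul_le {𝕜 : Type*} [NormedField 𝕜] {A₀ Aₙ μ α β x y : 𝕜} {r : ℝ}
    (hA₀ : A₀ ≠ 0) (hper : A₀ = μ * Aₙ) (hAₙ : Aₙ = x * β + y * α) (hα : α ≠ 0)
    (hr : ‖β / α‖ ≤ r) : ‖1 / (μ * α)‖ ≤ ‖A₀‖⁻¹ * (‖x‖ * r + ‖y‖) := by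
  have hμ : μ ≠ 0 := left_ne_zero_of_mul (hper ▸ hA₀)
  have hAₙ₀ : Aₙ ≠ 0 := right_ne_zero_of_mul (hper ▸ hA₀)
  have hquot : 1 / (μ * α) = A₀⁻¹ * (Aₙ / α) := by
    rw [hper]
    field_simp
  rw [hquot, norm_mul, norm_inv, hAₙ]
  gcongr
  exact norm_add_mul_div_le hα hr

theorem stmt12_general (a b : ℕ → ℂ) (ha : ∀ n, a n ≠ 0)
    (r : ℝ) (hrs : ∀ n : ℕ, ‖b n / a (n + 1)‖ ≤ r)
    (lam : ℂ)
    (lamseq : ℕ → ℂ) (hsq : Summable fun n : ℕ => ‖lamseq n‖ ^ 2)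
    (A : ℕ → ℂ)
    (hAn : ∀ n : ℕ, A (n + 1) = lamseq n * b n + lamseq (n + 1) * a (n + 1))
    (p : ℕ) (hp : 1 ≤ p)
    (hper : ∀ k : ℕ, 1 ≤ k → ∀ j : ℕ, j < p → A j = lam ^ (k * p) * A (k * p + j))
    (hA0ne : A 0 ≠ 0) :
    Summable fun k : ℕ => ‖1 / (lam ^ ((k + 1) * p) * a ((k + 1) * p))‖ ^ 2 := by
  have hbound (k : ℕ) : ‖1 / (lam ^ ((k + 1) * p) * a ((k + 1) * p))‖ ≤
      ‖A 0‖⁻¹ * (‖lamseq (p * k + (p - 1))‖ * r + ‖lamseq (p * k + (p - 1) + 1)‖) := by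
    have hperN : A 0 = lam ^ ((k + 1) * p) * A ((k + 1) * p) := by
      simpa using hper (k + 1) (by omega) 0 (by omega)
    have hN : (k + 1) * p = p * k + (p - 1) + 1 := by rw [add_mul, one_mul, mul_comm]; omega
    rw [hN] at hperN ⊢
    exact norm_one_div_mul_le hA0ne hperN (hAn _) (ha _) (hrs _)
  have hsum : Summable fun k =>
      (‖A 0‖⁻¹ * (‖lamseq (p * k + (p - 1))‖ * r + ‖lamseq (p * k + (p - 1) + 1)‖)) ^ 2 := by
    refine summable_sq_const_mul (summable_sq_add ?_ ?_) _
    · simpa only [mul_comm _ r] using summable_sq_const_mul (hsq.comp_mul_add hp _) r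
    · simpa only [add_assoc] using hsq.comp_mul_add hp (p - 1 + 1)
  exact hsum.of_nonneg_of_le (fun _ => sq_nonneg _) fun k =>
    pow_le_pow_left₀ (norm_nonneg _) (hbound k) 2

/-- Coefficient-level consequence of a nontrivial periodic vector of `λB` on `H_{a,b}`:
if `f = ∑ λₙ fₙ` satisfies `(λB)^p f = f` (encoded by the Taylor-coefficient identities
`A_j = λ^{kp} A_{kp+j}`) and `A_0 ≠ 0`, then `∑_{k≥1} |λ^{kp} a_{kp}|^{-2} < ∞`. -/
theorem stmt12 (a b : ℕ → ℂ) (ha : ∀ n, a n ≠ 0) (hb : ∀ n, b n ≠ 0)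
    (r : ℝ) (hr : r < 1) (hrs : ∀ n : ℕ, ‖b n / a (n + 1)‖ ≤ r)
    (lam : ℂ) (hlam : lam ≠ 0)
    (lamseq : ℕ → ℂ) (hsq : Summable fun n : ℕ => ‖lamseq n‖ ^ 2)
    (A : ℕ → ℂ) (hA0 : A 0 = lamseq 0 * a 0)
    (hAn : ∀ n : ℕ, A (n + 1) = lamseq n * b n + lamseq (n + 1) * a (n + 1))
    (p : ℕ) (hp : 1 ≤ p)
    (hper : ∀ k : ℕ, 1 ≤ k → ∀ j : ℕ, j < p → A j = lam ^ (k * p) * A (k * p + j))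
    (hA0ne : A 0 ≠ 0) :
    Summable fun k : ℕ => ‖1 / (lam ^ ((k + 1) * p) * a ((k + 1) * p))‖ ^ 2 :=
  stmt12_general a b ha r hrs lam lamseq hsq A hAn p hp hper hA0ne
end
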